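/- arXiv:math/0505561 — 2 statements merged into one kernel-verified Lean document; each statement's English description precedes it below -/
import Mathlib

section
/- For three Lagrangians, the map (v_1,v_2,v_3) ↦ (v_2 − v_3, −v_2, v_3) defines a surjective isometry from I^⊥ = {(v_1,v_2,v_3) ∈ l_1⊕l_2⊕l_3 : v_2 − v_3 ∈ l_1} (with Kashiwara's form q^K) onto K(l_1,l_2,l_3) = {w ∈ l_1⊕l_2⊕l_3 : w_1+w_2+w_3 = 0} with the form q(v,w) = Σ_{i ≥ j} B(v_i,w_j). Consequently τ(l_1,l_2,l_3) equals Kashiwara's Maslov index τ^K(l_1,l_2,l_3) in W(F). -/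
open Finset LinearMap Module

section Defs

variable {F V : Type} [Field F] [AddCommGroup V] [Module F V]

/-- `B` is a symplectic (non-degenerate alternating) bilinear form on `V`. -/
def IsSymplectic (B : V →ₗ[F] V →ₗ[F] F) : Prop :=
  (∀ x, B x x = 0) ∧ ∀ x : V, (∀ y, B x y = 0) → x = 0

/-- `l` is a Lagrangian subspace for `B` : it is isotropic and maximal
(equal to its own `B`-orthogonal). -/
def IsLagrangian (B : V →ₗ[F] V →ₗ[F] F) (l : Submodule F V) : Prop :=
  (∀ x ∈ l, ∀ y ∈ l, B x y = 0) ∧ ∀ x : V, (∀ y ∈ l, B x y = 0) → x ∈ l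

/-- The bilinear form `q(v,w) = ∑_{n ≥ i ≥ j ≥ 1} B(v_i, w_j)` on `n`-tuples
(indexed by `1,…,n`, modelled as functions `ℕ → V`). -/
noncomputable def mqL (n : ℕ) (B : V →ₗ[F] V →ₗ[F] F) :
    (ℕ → V) →ₗ[F] (ℕ → V) →ₗ[F] F :=
  ∑ i ∈ Icc 1 n, ∑ j ∈ Icc 1 i,
    B.compl₁₂ (LinearMap.proj i) (LinearMap.proj j)

/-- Membership in `K(l_1,…,l_n) = ker(Σ : ⊕ l_i → V)`: each component lies in the
corresponding Lagrangian and the components sum to zero. -/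
def InK (n : ℕ) (l : ℕ → Submodule F V) (v : ℕ → V) : Prop :=
  (∀ i ∈ Icc 1 n, v i ∈ l i) ∧ ∑ i ∈ Icc 1 n, v i = 0

/-- `K(l_1,…,l_n)` as a submodule of `ℕ → V` (components outside `{1,…,n}` vanish). -/
noncomputable def Ksub (n : ℕ) (l : ℕ → Submodule F V) : Submodule F (ℕ → V) :=
  (Submodule.pi Set.univ fun i => if i ∈ Icc 1 n then l i else ⊥) ⊓
    LinearMap.ker (∑ i ∈ Icc 1 n, (LinearMap.proj i : (ℕ → V) →ₗ[F] V))

/-- Cyclic successor on `{1,…,n}`. -/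
def nxt (n i : ℕ) : ℕ := if i = n then 1 else i + 1

/-- Cyclic predecessor on `{1,…,n}`. -/
def prv (n i : ℕ) : ℕ := if i = 1 then n else i - 1

end Defs

section Witt

variable {F M N : Type} [Field F] [AddCommGroup M] [Module F M]
  [AddCommGroup N] [Module F N]

/-- The orthogonal direct sum of two bilinear forms. -/
noncomputable def prodBF (B₁ : M →ₗ[F] M →ₗ[F] F) (B₂ : N →ₗ[F] N →ₗ[F] F) :
    (M × N) →ₗ[F] (M × N) →ₗ[F] F :=
  B₁.compl₁₂ (LinearMap.fst F M N) (LinearMap.fst F M N) +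
    B₂.compl₁₂ (LinearMap.snd F M N) (LinearMap.snd F M N)

/-- Two bilinear spaces are isometric. -/
def FormIsometric (B₁ : M →ₗ[F] M →ₗ[F] F) (B₂ : N →ₗ[F] N →ₗ[F] F) : Prop :=
  ∃ e : M ≃ₗ[F] N, ∀ x y, B₂ (e x) (e y) = B₁ x y

/-- A hyperbolic quadratic space: a non-degenerate symmetric form admitting a
totally isotropic subspace of half the dimension. -/
def IsHyperbolicForm (B : M →ₗ[F] M →ₗ[F] F) : Prop :=
  (∀ x y, B x y = B y x) ∧ (∀ x : M, (∀ y, B x y = 0) → x = 0) ∧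
    ∃ L : Submodule F M, (∀ x ∈ L, ∀ y ∈ L, B x y = 0) ∧
      Module.finrank F M = 2 * Module.finrank F L

/-- Two (non-degenerate symmetric) bilinear spaces represent the same class in the
Witt group `W(F)`: they become isometric after adding hyperbolic spaces. -/
def WittEquiv (B₁ : M →ₗ[F] M →ₗ[F] F) (B₂ : N →ₗ[F] N →ₗ[F] F) : Prop :=
  ∃ (m₁ m₂ : ℕ) (h₁ : (Fin m₁ → F) →ₗ[F] (Fin m₁ → F) →ₗ[F] F)
    (h₂ : (Fin m₂ → F) →ₗ[F] (Fin m₂ → F) →ₗ[F] F),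
    IsHyperbolicForm h₁ ∧ IsHyperbolicForm h₂ ∧
      FormIsometric (prodBF B₁ h₁) (prodBF B₂ h₂)

end Witt

section MoreDefs

variable {F V : Type} [Field F] [AddCommGroup V] [Module F V]

/-- `A` is an anti-derivative of the tuple `w` (cyclically indexed by `1,…,n`):
`A_{{i,i+1}} - A_{{i-1,i}} = w i`, where the edge `{i,i+1}` is indexed by `i`. -/
def IsAntiDeriv (n : ℕ) (w A : ℕ → V) : Prop :=
  ∀ i ∈ Icc 1 n, A i - A (prv n i) = w i

/-- The natural map `s : K(l_1,…,l_k) ⊕ K(l_1,l_k,…,l_n) → K(l_1,…,l_n)`,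
identity on each Lagrangian summand.  Here `v` is a `k`-tuple and `w` an
`(n-k+2)`-tuple whose slots `1, 2, 3, …` correspond to `l_1, l_k, l_{k+1}, …`. -/
def chainS (k : ℕ) (v w : ℕ → V) : ℕ → V := fun i =>
  (if i ≤ k then v i else 0) +
    (if i = 1 then w 1 else if k ≤ i then w (i - k + 2) else 0)

/-- The sequence `l_1, l_k, l_{k+1}, …, l_n` (of length `n - k + 2`). -/
def chainL (k : ℕ) (l : ℕ → Submodule F V) : ℕ → Submodule F V := fun j =>
  if j = 1 then l 1 else l (k + j - 2)

end MoreDefs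

/-- Kashiwara's bilinear form on `V × V × V`, as a bundled bilinear map:
`q^K(v,w) = (1/2)[B(v_1,w_2−w_3) + B(v_2,w_3−w_1) + B(v_3,w_1−w_2)]`. -/
noncomputable def qKashL {F V : Type} [Field F] [AddCommGroup V] [Module F V]
    (B : V →ₗ[F] V →ₗ[F] F) : (V × V × V) →ₗ[F] (V × V × V) →ₗ[F] F :=
  (2 : F)⁻¹ •
    (B.compl₁₂ (LinearMap.fst F V (V × V))
        ((LinearMap.fst F V V).comp (LinearMap.snd F V (V × V)) -
          (LinearMap.snd F V V).comp (LinearMap.snd F V (V × V))) +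
      B.compl₁₂ ((LinearMap.fst F V V).comp (LinearMap.snd F V (V × V)))
        ((LinearMap.snd F V V).comp (LinearMap.snd F V (V × V)) -
          LinearMap.fst F V (V × V)) +
      B.compl₁₂ ((LinearMap.snd F V V).comp (LinearMap.snd F V (V × V)))
        (LinearMap.fst F V (V × V) -
          (LinearMap.fst F V V).comp (LinearMap.snd F V (V × V))))

/-- The map `(v_1,v_2,v_3) ↦ (v_2 − v_3, −v_2, v_3)` as a tuple in `⊕ l_i`. -/
def kashMap {V : Type} [AddCommGroup V] (v : V × V × V) : ℕ → V := fun i =>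
  if i = 1 then v.2.1 - v.2.2 else if i = 2 then -v.2.1 else if i = 3 then v.2.2 else 0


/-! ### Auxiliary lemmas -/

section WittHelpers
variable {F M N P : Type} [Field F] [AddCommGroup M] [Module F M]
  [AddCommGroup N] [Module F N] [AddCommGroup P] [Module F P]

lemma formIsometric_refl (B : M →ₗ[F] M →ₗ[F] F) : FormIsometric B B :=
  ⟨LinearEquiv.refl F M, fun _ _ => rfl⟩

lemma formIsometric_symm {B₁ : M →ₗ[F] M →ₗ[F] F} {B₂ : N →ₗ[F] N →ₗ[F] F}
    (h : FormIsometric B₁ B₂) : FormIsometric B₂ B₁ := by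
  obtain ⟨e, he⟩ := h
  exact ⟨e.symm, fun x y => by
    conv_rhs => rw [← e.apply_symm_apply x, ← e.apply_symm_apply y, he]⟩

lemma formIsometric_trans {B₁ : M →ₗ[F] M →ₗ[F] F} {B₂ : N →ₗ[F] N →ₗ[F] F}
    {B₃ : P →ₗ[F] P →ₗ[F] F} (h : FormIsometric B₁ B₂) (h' : FormIsometric B₂ B₃) :
    FormIsometric B₁ B₃ := by
  obtain ⟨e, he⟩ := h; obtain ⟨e', he'⟩ := h'
  exact ⟨e.trans e', fun x y => by
    simp only [LinearEquiv.trans_apply, he', he]⟩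

lemma prodBF_apply (B₁ : M →ₗ[F] M →ₗ[F] F) (B₂ : N →ₗ[F] N →ₗ[F] F) (x y : M × N) :
    prodBF B₁ B₂ x y = B₁ x.1 y.1 + B₂ x.2 y.2 := rfl

lemma isHyperbolicForm_congr {B₁ : M →ₗ[F] M →ₗ[F] F} {B₂ : N →ₗ[F] N →ₗ[F] F}
    (h : FormIsometric B₁ B₂) (hh : IsHyperbolicForm B₁) : IsHyperbolicForm B₂ := by
  obtain ⟨e, he⟩ := h
  obtain ⟨hsym, hnd, L, hL, hrk⟩ := hh
  refine ⟨fun x y => ?_, fun x hx => ?_, L.map (e : M →ₗ[F] N), ?_, ?_⟩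
  · conv_lhs => rw [← e.apply_symm_apply x, ← e.apply_symm_apply y, he]
    conv_rhs => rw [← e.apply_symm_apply x, ← e.apply_symm_apply y, he]
    exact hsym _ _
  · have : e.symm x = 0 := by
      apply hnd
      intro y
      rw [← he, e.apply_symm_apply]
      exact hx _
    simpa using congrArg e this
  · rintro x ⟨a, ha, rfl⟩ y ⟨b, hb, rfl⟩
    rw [LinearEquiv.coe_coe, he]; exact hL a ha b hb
  · rw [← e.finrank_eq, hrk, LinearEquiv.finrank_map_eq]

lemma isHyperbolicForm_zero :
    IsHyperbolicForm (0 : (Fin 0 → F) →ₗ[F] (Fin 0 → F) →ₗ[F] F) := by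
  refine ⟨fun x y => rfl, fun x _ => Subsingleton.elim _ _, ⊥, by simp, ?_⟩
  simp [finrank_bot]

lemma prodBF_congr {M' N' : Type} [AddCommGroup M'] [Module F M']
    [AddCommGroup N'] [Module F N']
    {B₁ : M →ₗ[F] M →ₗ[F] F} {B₂ : N →ₗ[F] N →ₗ[F] F}
    {B₁' : M' →ₗ[F] M' →ₗ[F] F} {B₂' : N' →ₗ[F] N' →ₗ[F] F}
    (h₁ : FormIsometric B₁ B₁') (h₂ : FormIsometric B₂ B₂') :
    FormIsometric (prodBF B₁ B₂) (prodBF B₁' B₂') := by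
  obtain ⟨e₁, he₁⟩ := h₁; obtain ⟨e₂, he₂⟩ := h₂
  exact ⟨e₁.prodCongr e₂, fun x y => by
    simp only [prodBF_apply, LinearEquiv.prodCongr_apply, he₁, he₂]⟩

lemma prodBF_zero_right (B : M →ₗ[F] M →ₗ[F] F) :
    FormIsometric (prodBF B (0 : (Fin 0 → F) →ₗ[F] (Fin 0 → F) →ₗ[F] F)) B := by
  refine ⟨{ toFun := Prod.fst, invFun := fun m => (m, 0),
            map_add' := fun a b => rfl, map_smul' := fun c a => rfl,
            left_inv := fun a => by ext <;> first | rfl | exact (Fin.elim0 (by assumption))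
            right_inv := fun a => rfl }, fun x y => by simp [prodBF_apply]⟩

end WittHelpers

section KeyDecomp
variable {F M : Type} [Field F] [AddCommGroup M] [Module F M] [FiniteDimensional F M]

lemma key_decomp (Q : M →ₗ[F] M →ₗ[F] F) (hsym : ∀ x y : M, Q x y = Q y x)
    (hnd : ∀ x : M, (∀ y, Q x y = 0) → x = 0)
    (W : Submodule F M) (hco : ∀ v : M, (∀ w ∈ W, Q w v = 0) → v ∈ W) :
    ∃ (U : Submodule F M) (π : M →ₗ[F] ↥U) (m : ℕ)
      (h : (Fin m → F) →ₗ[F] (Fin m → F) →ₗ[F] F),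
      U ≤ W ∧ IsHyperbolicForm h ∧
      FormIsometric (prodBF (Q.domRestrict₁₂ U U) h) Q ∧
      (∀ u : ↥U, π (u : M) = u) ∧
      (∀ x : M, (∀ w ∈ W, Q w x = 0) → π x = 0) ∧
      (∀ x ∈ W, ∀ y ∈ W, Q ((π x : ↥U) : M) ((π y : ↥U) : M) = Q x y) ∧
      (∀ x ∈ W, π x = 0 → ∀ w ∈ W, Q w x = 0) := by
  have hrefl : Q.IsRefl := fun x y hxy => by rwa [hsym]
  have hndQ : LinearMap.BilinForm.Nondegenerate Q :=
    hrefl.nondegenerate_iff_separatingLeft.2 fun x h => hnd x h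
  set N : Submodule F M := LinearMap.BilinForm.orthogonal Q W with hN
  have memN : ∀ v : M, v ∈ N ↔ ∀ w ∈ W, Q w v = 0 := fun v => Iff.rfl
  have hNW : N ≤ W := fun v hv => hco v ((memN v).1 hv)
  obtain ⟨U₀, hU₀⟩ := Submodule.exists_isCompl (N.comap W.subtype)
  set U : Submodule F M := U₀.map W.subtype with hU
  have hUW : U ≤ W := Submodule.map_subtype_le W U₀
  have hmapN : (N.comap W.subtype).map W.subtype = N := by
    rw [Submodule.map_comap_subtype, inf_eq_right.2 hNW]
  have hUN_sup : U ⊔ N = W := by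
    rw [hU, ← hmapN, ← Submodule.map_sup, hU₀.symm.sup_eq_top, Submodule.map_top,
      Submodule.range_subtype]
  have hUN_inf : U ⊓ N = ⊥ := by
    rw [hU, ← hmapN, ← Submodule.map_inf _ (Submodule.injective_subtype W),
      hU₀.symm.inf_eq_bot, Submodule.map_bot]
  -- elements of W decompose
  have hdec : ∀ x ∈ W, ∃ a ∈ U, ∃ b ∈ N, x = a + b := by
    intro x hx
    rw [← hUN_sup] at hx
    obtain ⟨a, ha, b, hb, hab⟩ := Submodule.mem_sup.1 hx
    exact ⟨a, ha, b, hb, hab.symm⟩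
  have hWN : ∀ x ∈ W, ∀ b ∈ N, Q x b = 0 := fun x hx b hb => (memN b).1 hb x hx
  have hUnd : (LinearMap.BilinForm.restrict Q U).Nondegenerate := by
    refine (LinearMap.IsRefl.nondegenerate_iff_separatingLeft (hrefl.domRestrict U)).2 ?_
    rintro ⟨u, hu⟩ h0
    have huN : u ∈ N := by
      rw [memN]
      intro w hw
      obtain ⟨a, ha, b, hb, rfl⟩ := hdec w hw
      have h1 : Q u a = 0 := h0 ⟨a, ha⟩
      have h2 : Q u b = 0 := hWN u (hUW hu) b hb
      rw [map_add, LinearMap.add_apply, hrefl _ _ h1, hrefl _ _ h2, add_zero]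
    have : u ∈ U ⊓ N := ⟨hu, huN⟩
    rw [hUN_inf] at this
    exact Subtype.ext this
  have hcompl : IsCompl U (LinearMap.BilinForm.orthogonal Q U) :=
    LinearMap.BilinForm.isCompl_orthogonal_of_restrict_nondegenerate hrefl hUnd
  set Up : Submodule F M := LinearMap.BilinForm.orthogonal Q U with hUp
  have memUp : ∀ v : M, v ∈ Up ↔ ∀ w ∈ U, Q w v = 0 := fun v => Iff.rfl
  set π : M →ₗ[F] ↥U := U.linearProjOfIsCompl Up hcompl with hπ
  have hNUp : N ≤ Up := LinearMap.BilinForm.orthogonal_le hUW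
  -- rank counting
  have hrk1 : finrank F ↥U + finrank F ↥Up = finrank F M :=
    Submodule.finrank_add_eq_of_isCompl hcompl
  have hrk2 : finrank F ↥U + finrank F ↥N = finrank F ↥W := by
    rw [← Submodule.finrank_sup_add_finrank_inf_eq, hUN_sup, hUN_inf, finrank_bot, add_zero]
  have hrk3 : finrank F ↥N = finrank F M - finrank F ↥W :=
    LinearMap.BilinForm.finrank_orthogonal hndQ W
  have hrkW : finrank F ↥W ≤ finrank F M := Submodule.finrank_le W
  have hrkUp : finrank F ↥Up = 2 * finrank F ↥N := by omega
  -- hyperbolicity of Q on Up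
  have hUpnd : ∀ x : ↥Up, (∀ y : ↥Up, Q.domRestrict₁₂ Up Up x y = 0) → x = 0 := by
    rintro ⟨x, hx⟩ h0
    have : x = 0 := by
      apply hnd
      intro y
      have hy : y ∈ U ⊔ Up := by rw [hcompl.sup_eq_top]; trivial
      obtain ⟨a, ha, b, hb, rfl⟩ := Submodule.mem_sup.1 hy
      have h1 : Q x a = 0 := hrefl _ _ ((memUp x).1 hx a ha)
      have h2 : Q x b = 0 := h0 ⟨b, hb⟩
      rw [map_add, h1, h2, add_zero]
    exact Subtype.ext this
  set L : Submodule F ↥Up := N.comap Up.subtype with hL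
  have hrkL : finrank F ↥L = finrank F ↥N :=
    (Submodule.comapSubtypeEquivOfLe hNUp).finrank_eq
  have hypUp : IsHyperbolicForm (Q.domRestrict₁₂ Up Up) := by
    refine ⟨fun x y => hsym _ _, hUpnd, L, ?_, ?_⟩
    · rintro ⟨x, hx⟩ hxL ⟨y, hy⟩ hyL
      exact hWN x (hNW hxL) y hyL
    · rw [hrkUp, hrkL]
  -- transport Q|Up to coordinates
  set mm : ℕ := finrank F ↥Up with hm
  set e : ↥Up ≃ₗ[F] (Fin mm → F) := (Module.finBasis F ↥Up).equivFun with he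
  set h : (Fin mm → F) →ₗ[F] (Fin mm → F) →ₗ[F] F :=
    (Q.domRestrict₁₂ Up Up).compl₁₂ (e.symm : (Fin mm → F) →ₗ[F] ↥Up)
      (e.symm : (Fin mm → F) →ₗ[F] ↥Up) with hh
  have hiso_h : FormIsometric (Q.domRestrict₁₂ Up Up) h := by
    refine ⟨e, fun x y => ?_⟩
    simp [hh, LinearMap.compl₁₂_apply]
  have hyph : IsHyperbolicForm h := isHyperbolicForm_congr hiso_h hypUp
  have hiso1 : FormIsometric (prodBF (Q.domRestrict₁₂ U U) (Q.domRestrict₁₂ Up Up)) Q := by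
    refine ⟨Submodule.prodEquivOfIsCompl U Up hcompl, fun x y => ?_⟩
    have hx : (Submodule.prodEquivOfIsCompl U Up hcompl) x = (x.1 : M) + (x.2 : M) := rfl
    have hy : (Submodule.prodEquivOfIsCompl U Up hcompl) y = (y.1 : M) + (y.2 : M) := rfl
    rw [hx, hy]
    have h1 : Q (x.1 : M) (y.2 : M) = 0 := (memUp _).1 y.2.2 _ x.1.2
    have h2 : Q (x.2 : M) (y.1 : M) = 0 := hrefl _ _ ((memUp _).1 x.2.2 _ y.1.2)
    simp only [map_add, LinearMap.add_apply, h1, h2, add_zero, zero_add]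
    rfl
  have hisoF : FormIsometric (prodBF (Q.domRestrict₁₂ U U) h) Q :=
    formIsometric_trans
      (prodBF_congr (formIsometric_refl _) (formIsometric_symm hiso_h)) hiso1
  have hπleft : ∀ u : ↥U, π (u : M) = u := fun u =>
    Submodule.linearProjOfIsCompl_apply_left hcompl u
  have hπright : ∀ x : M, x ∈ Up → π x = 0 := fun x hx =>
    Submodule.linearProjOfIsCompl_apply_right hcompl ⟨x, hx⟩
  have hprop4 : ∀ x : M, (∀ w ∈ W, Q w x = 0) → π x = 0 := fun x hx =>
    hπright x (hNUp ((memN x).2 hx))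
  have hπab : ∀ a (ha : a ∈ U) b, b ∈ N → ((π (a + b) : ↥U) : M) = a := by
    intro a ha b hb
    rw [map_add, hπright b (hNUp hb), add_zero, hπleft ⟨a, ha⟩]
  have hprop5 : ∀ x ∈ W, ∀ y ∈ W, Q ((π x : ↥U) : M) ((π y : ↥U) : M) = Q x y := by
    intro x hx y hy
    obtain ⟨a, ha, b, hb, rfl⟩ := hdec x hx
    obtain ⟨c, hc, d, hd, rfl⟩ := hdec y hy
    rw [hπab a ha b hb, hπab c hc d hd]
    have h1 : Q a d = 0 := hWN a (hUW ha) d hd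
    have h2 : Q b c = 0 := hrefl _ _ (hWN c (hUW hc) b hb)
    have h3 : Q b d = 0 := hWN b (hNW hb) d hd
    simp only [map_add, LinearMap.add_apply, h1, h2, h3, add_zero, zero_add]
  have hprop6 : ∀ x ∈ W, π x = 0 → ∀ w ∈ W, Q w x = 0 := by
    intro x hx h0 w hw
    obtain ⟨a, ha, b, hb, rfl⟩ := hdec x hx
    have ha0 : a = 0 := by
      have := hπab a ha b hb
      rw [h0] at this
      simpa using this.symm
    rw [ha0, zero_add]
    exact hWN w hw b hb
  exact ⟨U, π, mm, h, hUW, hyph, hisoF, hπleft, hprop4, hprop5, hprop6⟩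

end KeyDecomp
section Comp
variable {F V : Type} [Field F] [AddCommGroup V] [Module F V]

lemma icc13 : (Icc 1 3 : Finset ℕ) = {1, 2, 3} := rfl

lemma qKashL_apply (B : V →ₗ[F] V →ₗ[F] F) (v w : V × V × V) :
    qKashL B v w = (2 : F)⁻¹ *
      (B v.1 (w.2.1 - w.2.2) + B v.2.1 (w.2.2 - w.1) + B v.2.2 (w.1 - w.2.1)) := by
  simp [qKashL, smul_eq_mul]
  ring

lemma mqL3_apply (B : V →ₗ[F] V →ₗ[F] F) (x y : ℕ → V) :
    mqL 3 B x y = B (x 1) (y 1) + (B (x 2) (y 1) + B (x 2) (y 2)) +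
      (B (x 3) (y 1) + (B (x 3) (y 2) + B (x 3) (y 3))) := by
  simp [mqL, icc13, Finset.sum_insert, Finset.mem_insert, LinearMap.sum_apply,
    show (Icc 1 1 : Finset ℕ) = {1} from rfl, show (Icc 1 2 : Finset ℕ) = {1, 2} from rfl]
  ring

lemma mem_Ksub3 {l : ℕ → Submodule F V} {x : ℕ → V} :
    x ∈ Ksub 3 l ↔ (∀ i, x i ∈ (if i ∈ Icc 1 3 then l i else (⊥ : Submodule F V))) ∧
      x 1 + (x 2 + x 3) = 0 := by
  unfold Ksub
  rw [Submodule.mem_inf, LinearMap.mem_ker]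
  simp [Submodule.mem_pi, icc13, Finset.sum_insert, LinearMap.sum_apply, add_assoc]

end Comp

section Comp2
variable {F V : Type} [Field F] [AddCommGroup V] [Module F V]

lemma bskew {B : V →ₗ[F] V →ₗ[F] F} (hB : IsSymplectic B) (x y : V) :
    B x y + B y x = 0 := by
  have h := hB.1 (x + y)
  simp only [map_add, LinearMap.add_apply, hB.1 x, hB.1 y] at h
  linear_combination h

lemma qKash_symm {B : V →ₗ[F] V →ₗ[F] F} (hB : IsSymplectic B) (v w : V × V × V) :
    qKashL B v w = qKashL B w v := by
  rw [qKashL_apply, qKashL_apply]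
  simp only [map_sub]
  linear_combination (2 : F)⁻¹ * (bskew hB v.1 w.2.1 - bskew hB v.1 w.2.2 +
    bskew hB v.2.1 w.2.2 - bskew hB v.2.1 w.1 + bskew hB v.2.2 w.1 - bskew hB v.2.2 w.2.1)

variable {B : V →ₗ[F] V →ₗ[F] F} {l : ℕ → Submodule F V}

/-- extract the componentwise facts about an element of `Ksub 3 l`. -/
lemma Ksub_spec {x : ℕ → V} (hx : x ∈ Ksub 3 l) :
    x 1 ∈ l 1 ∧ x 2 ∈ l 2 ∧ x 3 ∈ l 3 ∧ x 1 + (x 2 + x 3) = 0 := by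
  obtain ⟨h1, h2⟩ := mem_Ksub3.1 hx
  refine ⟨?_, ?_, ?_, h2⟩
  · have := h1 1; simpa using this
  · have := h1 2; simpa using this
  · have := h1 3; simpa using this

lemma mem_Ksub3' {x : ℕ → V} (h1 : x 1 ∈ l 1) (h2 : x 2 ∈ l 2) (h3 : x 3 ∈ l 3)
    (h0 : ∀ i, i ∉ Icc 1 3 → x i = 0) (hsum : x 1 + (x 2 + x 3) = 0) :
    x ∈ Ksub 3 l := by
  refine mem_Ksub3.2 ⟨fun i => ?_, hsum⟩
  by_cases hi : i ∈ Icc 1 3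
  · rw [if_pos hi]
    simp only [Finset.mem_Icc] at hi
    obtain ⟨hi1, hi2⟩ := hi
    interval_cases i
    · exact h1
    · exact h2
    · exact h3
  · rw [if_neg hi]
    simp [h0 i hi]

lemma mq_eq (hl : ∀ i ∈ Icc 1 3, IsLagrangian B (l i)) {x y : ℕ → V}
    (hx : x ∈ Ksub 3 l) (hy : y ∈ Ksub 3 l) :
    mqL 3 B x y = B (x 3) (y 2) := by
  obtain ⟨hx1, hx2, hx3, hxs⟩ := Ksub_spec hx
  obtain ⟨hy1, hy2, hy3, hys⟩ := Ksub_spec hy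
  have e2 : B (x 2) (y 2) = 0 := (hl 2 (by decide)).1 _ hx2 _ hy2
  have e3 : B (x 3) (y 3) = 0 := (hl 3 (by decide)).1 _ hx3 _ hy3
  have e4 : B (x 1) (y 1) + (B (x 2) (y 1) + B (x 3) (y 1)) = 0 := by
    have : B (x 1 + (x 2 + x 3)) (y 1) = 0 := by rw [hxs]; simp
    simpa [map_add] using this
  rw [mqL3_apply]
  linear_combination e2 + e3 + e4

lemma b23 (hl : ∀ i ∈ Icc 1 3, IsLagrangian B (l i)) {x y : ℕ → V}
    (hx : x ∈ Ksub 3 l) (hy : y ∈ Ksub 3 l) :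
    B (x 2) (y 3) + B (x 3) (y 2) = 0 := by
  obtain ⟨hx1, hx2, hx3, hxs⟩ := Ksub_spec hx
  obtain ⟨hy1, hy2, hy3, hys⟩ := Ksub_spec hy
  have e11 : B (x 1) (y 1) = 0 := (hl 1 (by decide)).1 _ hx1 _ hy1
  have e22 : B (x 2) (y 2) = 0 := (hl 2 (by decide)).1 _ hx2 _ hy2
  have e33 : B (x 3) (y 3) = 0 := (hl 3 (by decide)).1 _ hx3 _ hy3
  have fa : B (x 1) (y 3) + (B (x 2) (y 3) + B (x 3) (y 3)) = 0 := by
    have : B (x 1 + (x 2 + x 3)) (y 3) = 0 := by rw [hxs]; simp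
    simpa [map_add] using this
  have fb : B (x 1) (y 1) + (B (x 1) (y 2) + B (x 1) (y 3)) = 0 := by
    have : B (x 1) (y 1 + (y 2 + y 3)) = 0 := by rw [hys]; simp
    simpa [map_add] using this
  have fc : B (x 1) (y 2) + (B (x 2) (y 2) + B (x 3) (y 2)) = 0 := by
    have : B (x 1 + (x 2 + x 3)) (y 2) = 0 := by rw [hxs]; simp
    simpa [map_add] using this
  linear_combination fa - fb + fc - e33 + e11 - e22

lemma qsig (hchar : (2 : F) ≠ 0) (hl : ∀ i ∈ Icc 1 3, IsLagrangian B (l i)) {x y : ℕ → V}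
    (hx : x ∈ Ksub 3 l) (hy : y ∈ Ksub 3 l) :
    qKashL B (0, -(x 2), x 3) (0, -(y 2), y 3) = mqL 3 B x y := by
  rw [qKashL_apply, mq_eq hl hx hy]
  have hb := b23 hl hx hy
  simp only [map_sub, map_neg, map_zero, LinearMap.zero_apply, LinearMap.neg_apply,
    LinearMap.sub_apply, sub_zero, zero_sub, sub_neg_eq_add, zero_add]
  field_simp
  linear_combination (-1 : F) * hb

lemma qsigW (hchar : (2 : F) ≠ 0) (hl : ∀ i ∈ Icc 1 3, IsLagrangian B (l i)) {x : ℕ → V}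
    (hx : x ∈ Ksub 3 l) {p : V × V × V} (hp1 : p.1 ∈ l 1) (hp2 : p.2.1 ∈ l 2)
    (hp3 : p.2.2 ∈ l 3) (hpw : p.2.1 - p.2.2 ∈ l 1) :
    qKashL B (0, -(x 2), x 3) p = - B (x 3) p.2.1 := by
  obtain ⟨hx1, hx2, hx3, hxs⟩ := Ksub_spec hx
  have e11 : B (x 1) p.1 = 0 := (hl 1 (by decide)).1 _ hx1 _ hp1
  have e22 : B (x 2) p.2.1 = 0 := (hl 2 (by decide)).1 _ hx2 _ hp2
  have e33 : B (x 3) p.2.2 = 0 := (hl 3 (by decide)).1 _ hx3 _ hp3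
  have fa : B (x 1) p.1 + (B (x 2) p.1 + B (x 3) p.1) = 0 := by
    have : B (x 1 + (x 2 + x 3)) p.1 = 0 := by rw [hxs]; simp
    simpa [map_add] using this
  have fb : B (x 1) p.2.2 + (B (x 2) p.2.2 + B (x 3) p.2.2) = 0 := by
    have : B (x 1 + (x 2 + x 3)) p.2.2 = 0 := by rw [hxs]; simp
    simpa [map_add] using this
  have fc : B (x 1) p.2.1 - B (x 1) p.2.2 = 0 := by
    have : B (x 1) (p.2.1 - p.2.2) = 0 := (hl 1 (by decide)).1 _ hx1 _ hpw
    simpa [map_sub] using this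
  have fd : B (x 1) p.2.1 + (B (x 2) p.2.1 + B (x 3) p.2.1) = 0 := by
    have : B (x 1 + (x 2 + x 3)) p.2.1 = 0 := by rw [hxs]; simp
    simpa [map_add] using this
  rw [qKashL_apply]
  simp only [map_sub, map_neg, map_zero, LinearMap.zero_apply, LinearMap.neg_apply,
    LinearMap.sub_apply]
  field_simp
  linear_combination fa - e11 - fb + e33 - fc + fd - e22

end Comp2

set_option maxHeartbeats 2000000 in
lemma kash_witt {F V : Type} [Field F] [AddCommGroup V] [Module F V] [FiniteDimensional F V]
    (hchar : (2 : F) ≠ 0)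
    (B : V →ₗ[F] V →ₗ[F] F) (hB : IsSymplectic B)
    (l : ℕ → Submodule F V) (hl : ∀ i ∈ Icc 1 3, IsLagrangian B (l i))
    (PP : Submodule F (V × V × V)) (hPPeq : PP = (l 1).prod ((l 2).prod (l 3)))
    (t : (↥(Ksub 3 l) ⧸ LinearMap.ker ((mqL 3 B).domRestrict₁₂ (Ksub 3 l) (Ksub 3 l))) →ₗ[F]
         (↥(Ksub 3 l) ⧸ LinearMap.ker ((mqL 3 B).domRestrict₁₂ (Ksub 3 l) (Ksub 3 l))) →ₗ[F] F)
    (ht : ∀ x y : ↥(Ksub 3 l),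
      t (Submodule.Quotient.mk x) (Submodule.Quotient.mk y) = mqL 3 B x y)
    (tK : (↥PP ⧸ LinearMap.ker ((qKashL B).domRestrict₁₂ PP PP)) →ₗ[F]
          (↥PP ⧸ LinearMap.ker ((qKashL B).domRestrict₁₂ PP PP)) →ₗ[F] F)
    (htK : ∀ x y : ↥PP,
      tK (Submodule.Quotient.mk x) (Submodule.Quotient.mk y) = qKashL B x y) :
    WittEquiv t tK := by
  have memPP : ∀ p : ↥PP, (p : V × V × V).1 ∈ l 1 ∧ (p : V × V × V).2.1 ∈ l 2 ∧
      (p : V × V × V).2.2 ∈ l 3 := by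
    intro p
    have h : (p : V × V × V) ∈ (l 1).prod ((l 2).prod (l 3)) := by
      rw [← hPPeq]; exact p.2
    exact ⟨h.1, h.2.1, h.2.2⟩
  have km1 : ∀ v : V × V × V, kashMap v 1 = v.2.1 - v.2.2 := fun v => rfl
  have km2 : ∀ v : V × V × V, kashMap v 2 = -v.2.1 := fun v => rfl
  have km3 : ∀ v : V × V × V, kashMap v 3 = v.2.2 := fun v => rfl
  have km0 : ∀ (v : V × V × V) i, i ∉ Icc 1 3 → kashMap v i = 0 := by
    intro v i hi
    simp only [Finset.mem_Icc, not_and, not_le] at hi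
    have h1 : i ≠ 1 := by omega
    have h2 : i ≠ 2 := by omega
    have h3 : i ≠ 3 := by omega
    simp [kashMap, h1, h2, h3]
  have hskew : ∀ a b : V, B a b + B b a = 0 := bskew hB
  have hl1 := hl 1 (by decide)
  have hl2 := hl 2 (by decide)
  have hl3 := hl 3 (by decide)
  -- symmetry and nondegeneracy of tK
  have htKsym : ∀ z z', tK z z' = tK z' z := by
    intro z z'
    obtain ⟨x, rfl⟩ := Submodule.Quotient.mk_surjective _ z
    obtain ⟨y, rfl⟩ := Submodule.Quotient.mk_surjective _ z'
    rw [htK, htK]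
    exact qKash_symm hB _ _
  have htKnd : ∀ z, (∀ z', tK z z' = 0) → z = 0 := by
    intro z hz
    obtain ⟨x, rfl⟩ := Submodule.Quotient.mk_surjective _ z
    rw [Submodule.Quotient.mk_eq_zero, LinearMap.mem_ker]
    ext y
    simp only [LinearMap.domRestrict₁₂_apply, LinearMap.zero_apply]
    have h := hz (Submodule.Quotient.mk y)
    rwa [htK] at h
  -- the coisotropic subspace
  set dmap : ↥PP →ₗ[F] V := (((LinearMap.fst F V V).comp (LinearMap.snd F V (V × V))) -
      ((LinearMap.snd F V V).comp (LinearMap.snd F V (V × V)))).comp PP.subtype with hdmap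
  set Wsub : Submodule F ↥PP := (l 1).comap dmap with hWsub
  have memWsub : ∀ p : ↥PP, p ∈ Wsub ↔ (p : V × V × V).2.1 - (p : V × V × V).2.2 ∈ l 1 :=
    fun p => Iff.rfl
  set mk := (LinearMap.ker ((qKashL B).domRestrict₁₂ PP PP)).mkQ with hmk
  have hmk_eq : ∀ p : ↥PP, mk p = Submodule.Quotient.mk p := fun p => rfl
  set Wbar := Wsub.map mk with hWbar
  have hco : ∀ z, (∀ w ∈ Wbar, tK w z = 0) → z ∈ Wbar := by
    intro z hz
    obtain ⟨x, rfl⟩ := Submodule.Quotient.mk_surjective _ z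
    have hx : (x : V × V × V).2.1 - (x : V × V × V).2.2 ∈ l 1 := by
      apply hl1.2
      intro y hy
      have hyP : ((y, 0, 0) : V × V × V) ∈ PP := by
        rw [hPPeq]
        exact ⟨hy, Submodule.zero_mem _, Submodule.zero_mem _⟩
      have hyW : (⟨(y, 0, 0), hyP⟩ : ↥PP) ∈ Wsub := by
        rw [memWsub]
        show (0 : V) - 0 ∈ l 1
        simpa using Submodule.zero_mem (l 1)
      have h0 : tK (mk ⟨(y, 0, 0), hyP⟩) (Submodule.Quotient.mk x) = 0 :=
        hz _ (Submodule.mem_map_of_mem hyW)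
      rw [hmk_eq, htK, qKashL_apply] at h0
      have h0' : B y ((x : V × V × V).2.1 - (x : V × V × V).2.2) = 0 := by
        simp only [map_zero, LinearMap.zero_apply, add_zero, zero_sub, sub_zero,
          map_neg, map_sub] at h0
        have h2 : (2 : F)⁻¹ ≠ 0 := inv_ne_zero hchar
        field_simp at h0
        rw [map_sub]
        linear_combination h0
      have hsw := hskew y ((x : V × V × V).2.1 - (x : V × V × V).2.2)
      linear_combination hsw - h0'
    exact Submodule.mem_map_of_mem ((memWsub x).2 hx)
  obtain ⟨U, π, m, hform, hUW, hyph, hisoF, hπleft, hprop4, hprop5, hprop6⟩ :=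
    key_decomp tK htKsym htKnd Wbar hco
  -- the section σ from K(l₁,l₂,l₃) into P
  set σ0 : ↥(Ksub 3 l) →ₗ[F] V × V × V :=
    LinearMap.prod 0 (LinearMap.prod (-((LinearMap.proj 2) ∘ₗ (Ksub 3 l).subtype))
      ((LinearMap.proj 3) ∘ₗ (Ksub 3 l).subtype)) with hσ0
  have hσ0_apply : ∀ x : ↥(Ksub 3 l),
      σ0 x = ((0 : V), -((x : ℕ → V) 2), (x : ℕ → V) 3) := fun x => rfl
  have hσmem : ∀ x : ↥(Ksub 3 l), σ0 x ∈ PP := by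
    intro x
    obtain ⟨h1, h2, h3, hs⟩ := Ksub_spec x.2
    rw [hPPeq]
    exact ⟨Submodule.zero_mem _, Submodule.neg_mem _ h2, h3⟩
  set σ : ↥(Ksub 3 l) →ₗ[F] ↥PP := σ0.codRestrict PP hσmem with hσ
  have hσ_apply : ∀ x : ↥(Ksub 3 l),
      (σ x : V × V × V) = ((0 : V), -((x : ℕ → V) 2), (x : ℕ → V) 3) := fun x => rfl
  have hσW : ∀ x : ↥(Ksub 3 l), σ x ∈ Wsub := by
    intro x
    rw [memWsub, hσ_apply]
    obtain ⟨h1, h2, h3, hs⟩ := Ksub_spec x.2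
    have he : -((x : ℕ → V) 2) - (x : ℕ → V) 3 = (x : ℕ → V) 1 := by
      have h : (x : ℕ → V) 1 - (-((x : ℕ → V) 2) - (x : ℕ → V) 3) = 0 := by
        rw [← hs]; abel
      exact (sub_eq_zero.1 h).symm
    show -((x : ℕ → V) 2) - (x : ℕ → V) 3 ∈ l 1
    rw [he]; exact h1
  have hmkσW : ∀ x : ↥(Ksub 3 l), mk (σ x) ∈ Wbar :=
    fun x => Submodule.mem_map_of_mem (hσW x)
  set g : ↥(Ksub 3 l) →ₗ[F] ↥U := π ∘ₗ (mk ∘ₗ σ) with hg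
  have hg_apply : ∀ x : ↥(Ksub 3 l), g x = π (mk (σ x)) := fun x => rfl
  have hgiso : ∀ x y : ↥(Ksub 3 l),
      tK (g x : ↥PP ⧸ LinearMap.ker ((qKashL B).domRestrict₁₂ PP PP))
        (g y : ↥PP ⧸ LinearMap.ker ((qKashL B).domRestrict₁₂ PP PP)) = mqL 3 B x y := by
    intro x y
    rw [hg_apply, hg_apply, hprop5 (mk (σ x)) (hmkσW x) (mk (σ y)) (hmkσW y),
      hmk_eq, hmk_eq, htK, hσ_apply, hσ_apply]
    exact qsig hchar hl x.2 y.2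
  -- kashMap of an element of Wsub lies in Ksub
  have hkp : ∀ p : ↥PP, p ∈ Wsub → kashMap (p : V × V × V) ∈ Ksub 3 l := by
    intro p hp
    obtain ⟨hp1, hp2, hp3⟩ := memPP p
    refine mem_Ksub3' ?_ ?_ ?_ (km0 _) ?_
    · rw [km1]; exact (memWsub p).1 hp
    · rw [km2]; exact Submodule.neg_mem _ hp2
    · rw [km3]; exact hp3
    · rw [km1, km2, km3]; abel
  -- kernel identification
  have hker : (LinearMap.ker ((mqL 3 B).domRestrict₁₂ (Ksub 3 l) (Ksub 3 l))) = LinearMap.ker g := by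
    ext x
    simp only [LinearMap.mem_ker]
    constructor
    · intro hx
      rw [hg_apply]
      apply hprop4
      intro w hw
      obtain ⟨p, hp, rfl⟩ := hw
      rw [hmk_eq, hmk_eq, htK, qKash_symm hB]
      obtain ⟨hp1, hp2, hp3⟩ := memPP p
      rw [hσ_apply]
      rw [qsigW hchar hl x.2 hp1 hp2 hp3 ((memWsub p).1 hp)]
      -- - B (x 3) p.2.1 = 0 via mqL x (kashMap p) = 0
      have hkpm := hkp p hp
      have h0 : mqL 3 B (x : ℕ → V) (kashMap (p : V × V × V)) = 0 := by
        have := LinearMap.ext_iff.1 hx ⟨kashMap (p : V × V × V), hkpm⟩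
        simpa only [LinearMap.domRestrict₁₂_apply, LinearMap.zero_apply] using this
      rw [mq_eq hl x.2 hkpm, km2] at h0
      rw [map_neg] at h0
      linear_combination h0
    · intro hx
      have h6 := hprop6 (mk (σ x)) (hmkσW x) (by rw [← hg_apply]; exact hx)
      ext y
      simp only [LinearMap.domRestrict₁₂_apply, LinearMap.zero_apply]
      have hy := h6 (mk (σ y)) (hmkσW y)
      rw [hmk_eq, hmk_eq, htK, hσ_apply, hσ_apply, qsig hchar hl y.2 x.2] at hy
      have hsymq : mqL 3 B (x : ℕ → V) (y : ℕ → V) = B ((x : ℕ → V) 3) ((y : ℕ → V) 2) :=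
        mq_eq hl x.2 y.2
      have hsymq' : mqL 3 B (y : ℕ → V) (x : ℕ → V) = B ((y : ℕ → V) 3) ((x : ℕ → V) 2) :=
        mq_eq hl y.2 x.2
      have hb := b23 hl x.2 y.2
      have hsw := hskew ((x : ℕ → V) 2) ((y : ℕ → V) 3)
      rw [hsymq]
      rw [hsymq'] at hy
      -- B x3 y2 = 0 given B y3 x2 = 0 : B y3 x2 = -B x2 y3 = B x3 y2
      linear_combination hb - hsw + hy
  -- surjectivity of g
  have hgsurj : Function.Surjective g := by
    intro u
    have hu : (u : ↥PP ⧸ LinearMap.ker ((qKashL B).domRestrict₁₂ PP PP)) ∈ Wbar := hUW u.2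
    obtain ⟨p, hpW, hpu⟩ := hu
    obtain ⟨hp1, hp2, hp3⟩ := memPP p
    set x : ↥(Ksub 3 l) := ⟨kashMap (p : V × V × V), hkp p hpW⟩ with hx
    have hσx : (σ x : V × V × V) = ((0 : V), (p : V × V × V).2.1, (p : V × V × V).2.2) := by
      rw [hσ_apply]
      have : (x : ℕ → V) 2 = -(p : V × V × V).2.1 := km2 _
      have h3 : (x : ℕ → V) 3 = (p : V × V × V).2.2 := km3 _
      rw [this, h3, neg_neg]
    set d : ↥PP := p - σ x with hd
    have hdval : (d : V × V × V) = ((p : V × V × V).1, 0, 0) := by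
      rw [hd]
      show (p : V × V × V) - (σ x : V × V × V) = _
      rw [hσx]
      ext <;> simp
    have hπd : π (mk d) = 0 := by
      apply hprop4
      intro w hw
      obtain ⟨q, hq, rfl⟩ := hw
      rw [hmk_eq, hmk_eq, htK, qKashL_apply, hdval]
      have e := hl1.1 _ ((memWsub q).1 hq) _ hp1
      rw [map_sub] at e
      simp only [LinearMap.sub_apply] at e
      simp only [sub_zero, zero_sub, sub_self, map_zero, map_neg, LinearMap.zero_apply]
      linear_combination (2 : F)⁻¹ * (- e)
    have hmkd : mk (σ x) = mk p - mk d := by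
      rw [← map_sub]
      congr 1
      rw [hd]
      abel
    have hgx : g x = u := by
      rw [hg_apply, hmkd, map_sub, hπd, sub_zero, hpu, hπleft]
    exact ⟨x, hgx⟩
  -- the equivalence between the two quotients
  have hle : (LinearMap.ker ((mqL 3 B).domRestrict₁₂ (Ksub 3 l) (Ksub 3 l))) ≤ LinearMap.ker g := hker.le
  set gbar := (LinearMap.ker ((mqL 3 B).domRestrict₁₂ (Ksub 3 l) (Ksub 3 l))).liftQ g hle with hgbar
  have hgbar_mk : ∀ x : ↥(Ksub 3 l), gbar (Submodule.Quotient.mk x) = g x :=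
    fun x => Submodule.liftQ_apply _ _ _
  have hgbarbij : Function.Bijective gbar := by
    constructor
    · rw [← LinearMap.ker_eq_bot]
      exact Submodule.ker_liftQ_eq_bot _ _ _ hker.ge
    · intro u
      obtain ⟨x, hx⟩ := hgsurj u
      exact ⟨Submodule.Quotient.mk x, by rw [hgbar_mk]; exact hx⟩
  set e_t := LinearEquiv.ofBijective gbar hgbarbij with he_t
  have he_t_mk : ∀ x : ↥(Ksub 3 l), e_t (Submodule.Quotient.mk x) = g x := hgbar_mk
  have hiso_t : FormIsometric t (tK.domRestrict₁₂ U U) := by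
    refine ⟨e_t, fun a b => ?_⟩
    obtain ⟨x, rfl⟩ := Submodule.Quotient.mk_surjective _ a
    obtain ⟨y, rfl⟩ := Submodule.Quotient.mk_surjective _ b
    rw [he_t_mk, he_t_mk, ht]
    rw [LinearMap.domRestrict₁₂_apply]
    exact hgiso x y
  exact ⟨m, 0, hform, 0, hyph, isHyperbolicForm_zero,
    formIsometric_trans (prodBF_congr hiso_t (formIsometric_refl _))
      (formIsometric_trans hisoF (formIsometric_symm (prodBF_zero_right tK)))⟩

/-- `(v_1,v_2,v_3) ↦ (v_2−v_3,−v_2,v_3)` is a surjective isometry from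
`I^⊥ = {v ∈ l_1⊕l_2⊕l_3 : v_2 − v_3 ∈ l_1}` (with Kashiwara's form) onto
`K(l_1,l_2,l_3)` (with the form `q`); consequently `τ(l_1,l_2,l_3) = τ^K(l_1,l_2,l_3)`
in the Witt group `W(F)`. -/
theorem kashiwara_comparison
    {F V : Type} [Field F] [AddCommGroup V] [Module F V] [FiniteDimensional F V]
    (hchar : (2 : F) ≠ 0)
    (B : V →ₗ[F] V →ₗ[F] F) (hB : IsSymplectic B)
    (l : ℕ → Submodule F V) (hl : ∀ i ∈ Icc 1 3, IsLagrangian B (l i))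
    (t : (↥(Ksub 3 l) ⧸ LinearMap.ker ((mqL 3 B).domRestrict₁₂ (Ksub 3 l) (Ksub 3 l))) →ₗ[F]
         (↥(Ksub 3 l) ⧸ LinearMap.ker ((mqL 3 B).domRestrict₁₂ (Ksub 3 l) (Ksub 3 l))) →ₗ[F] F)
    (ht : ∀ x y : ↥(Ksub 3 l),
      t (Submodule.Quotient.mk x) (Submodule.Quotient.mk y) = mqL 3 B x y)
    (tK : (↥((l 1).prod ((l 2).prod (l 3))) ⧸
            LinearMap.ker ((qKashL B).domRestrict₁₂ ((l 1).prod ((l 2).prod (l 3)))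
              ((l 1).prod ((l 2).prod (l 3))))) →ₗ[F]
          (↥((l 1).prod ((l 2).prod (l 3))) ⧸
            LinearMap.ker ((qKashL B).domRestrict₁₂ ((l 1).prod ((l 2).prod (l 3)))
              ((l 1).prod ((l 2).prod (l 3))))) →ₗ[F] F)
    (htK : ∀ x y : ↥((l 1).prod ((l 2).prod (l 3))),
      tK (Submodule.Quotient.mk x) (Submodule.Quotient.mk y) = qKashL B x y) :
    (∀ v w : V × V × V,
        v.1 ∈ l 1 → v.2.1 ∈ l 2 → v.2.2 ∈ l 3 → v.2.1 - v.2.2 ∈ l 1 →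
        w.1 ∈ l 1 → w.2.1 ∈ l 2 → w.2.2 ∈ l 3 → w.2.1 - w.2.2 ∈ l 1 →
          InK 3 l (kashMap v) ∧ mqL 3 B (kashMap v) (kashMap w) = qKashL B v w) ∧
      (∀ u : ℕ → V, InK 3 l u →
        ∃ v : V × V × V, v.1 ∈ l 1 ∧ v.2.1 ∈ l 2 ∧ v.2.2 ∈ l 3 ∧ v.2.1 - v.2.2 ∈ l 1 ∧
          ∀ i ∈ Icc 1 3, kashMap v i = u i) ∧
      WittEquiv t tK := by
  have hl1 := hl 1 (by decide)
  have hl2 := hl 2 (by decide)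
  have hl3 := hl 3 (by decide)
  have km1 : ∀ v : V × V × V, kashMap v 1 = v.2.1 - v.2.2 := fun v => rfl
  have km2 : ∀ v : V × V × V, kashMap v 2 = -v.2.1 := fun v => rfl
  have km3 : ∀ v : V × V × V, kashMap v 3 = v.2.2 := fun v => rfl
  have km0 : ∀ (v : V × V × V) i, i ∉ Icc 1 3 → kashMap v i = 0 := by
    intro v i hi
    simp only [Finset.mem_Icc, not_and, not_le] at hi
    have h1 : i ≠ 1 := by omega
    have h2 : i ≠ 2 := by omega
    have h3 : i ≠ 3 := by omega
    simp [kashMap, h1, h2, h3]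
  refine ⟨?_, ?_, ?_⟩
  · -- Part 1: isometry property
    intro v w hv1 hv2 hv3 hv4 hw1 hw2 hw3 hw4
    constructor
    · constructor
      · intro i hi
        simp only [Finset.mem_Icc] at hi
        obtain ⟨ha, hb⟩ := hi
        interval_cases i
        · rw [km1]; exact hv4
        · rw [km2]; exact Submodule.neg_mem _ hv2
        · rw [km3]; exact hv3
      · rw [icc13]
        rw [Finset.sum_insert (by decide), Finset.sum_insert (by decide),
          Finset.sum_singleton, km1, km2, km3]
        abel
    · rw [mqL3_apply, qKashL_apply, km1, km2, km3, km1, km2, km3]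
      have E1 : B (v.2.1 - v.2.2) (w.2.1 - w.2.2) = 0 := hl1.1 _ hv4 _ hw4
      have E2 : B v.2.1 w.2.1 = 0 := hl2.1 _ hv2 _ hw2
      have E3 : B v.2.2 w.2.2 = 0 := hl3.1 _ hv3 _ hw3
      have E4 : B v.1 (w.2.1 - w.2.2) = 0 := hl1.1 _ hv1 _ hw4
      have E5 : B (v.2.1 - v.2.2) w.1 = 0 := hl1.1 _ hv4 _ hw1
      simp only [map_sub, map_neg, LinearMap.sub_apply, LinearMap.neg_apply] at E1 E4 E5 ⊢
      field_simp
      linear_combination E1 + E2 + E3 - E4 + E5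
  · -- Part 2: surjectivity
    intro u hu
    obtain ⟨hmem, hsum⟩ := hu
    have hu1 : u 1 ∈ l 1 := hmem 1 (by decide)
    have hu2 : u 2 ∈ l 2 := hmem 2 (by decide)
    have hu3 : u 3 ∈ l 3 := hmem 3 (by decide)
    have hsum' : u 1 + (u 2 + u 3) = 0 := by
      rw [icc13, Finset.sum_insert (by decide), Finset.sum_insert (by decide),
        Finset.sum_singleton] at hsum
      exact hsum
    have hkey : -(u 2) - u 3 = u 1 := by
      have h : u 1 - (-(u 2) - u 3) = 0 := by rw [← hsum']; abel
      exact (sub_eq_zero.1 h).symm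
    refine ⟨(u 1, -(u 2), u 3), hu1, Submodule.neg_mem _ hu2, hu3, ?_, ?_⟩
    · show -(u 2) - u 3 ∈ l 1
      rw [hkey]; exact hu1
    · intro i hi
      simp only [Finset.mem_Icc] at hi
      obtain ⟨ha, hb⟩ := hi
      interval_cases i
      · rw [km1]; exact hkey
      · rw [km2]; exact neg_neg _
      · rw [km3]
  · exact kash_witt hchar B hB l hl _ rfl t ht tK htK
end

section
/- The maps Φ_{−1}, Φ_0, Φ_1 defined by ⟨Φ_{−1}(a),v⟩ = ⟨a,Φ_1(v)⟩ = B(a_{\{n,1\}}, v) and ⟨Φ_0(a),b⟩ = (1/2)Σ_{i ≥ j}(B(a_i,b_j)+B(b_i,a_j)) form a chain map from the complex C = [⊕(l_i∩l_{i+1}) →∂→ ⊕l_i →Σ→ V] to its dual C* = [V* →Σ*→ ⊕l_i* →∂*→ ⊕(l_i∩l_{i+1})*], i.e. Φ_0 ∘ ∂ = Σ* ∘ Φ_{−1} and Φ_1 composed appropriately: ∂* ∘ Φ_0 = Φ_1 ∘ Σ as maps ⊕ l_i → ⊕(l_i∩l_{i+1})*. -/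
open Finset LinearMap Module

section Aux

lemma aux_tri_comm {M : Type*} [AddCommMonoid M] (n : ℕ) (f : ℕ → ℕ → M) :
    ∑ i ∈ Icc 1 n, ∑ j ∈ Icc 1 i, f i j = ∑ j ∈ Icc 1 n, ∑ i ∈ Icc j n, f i j := by
  have h1 : ∀ i ∈ Icc 1 n, (Icc 1 i) = (Icc 1 n).filter (fun j => j ≤ i) := by
    intro i hi
    simp only [mem_Icc] at hi
    ext j
    simp only [mem_Icc, mem_filter]
    omega
  have h2 : ∀ j ∈ Icc 1 n, (Icc j n) = (Icc 1 n).filter (fun i => j ≤ i) := by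
    intro j hj
    simp only [mem_Icc] at hj
    ext i
    simp only [mem_Icc, mem_filter]
    omega
  rw [Finset.sum_congr rfl fun i hi => by rw [h1 i hi, Finset.sum_filter]]
  rw [Finset.sum_comm]
  exact Finset.sum_congr rfl fun j hj => by rw [h2 j hj, Finset.sum_filter]

lemma aux_telescope {M : Type*} [AddCommGroup M] (n j m : ℕ) (hj : 1 ≤ j)
    (hm : j ≤ m) (g : ℕ → M) :
    ∑ i ∈ Icc j m, (g i - g (prv n i)) = g m - g (prv n j) := by
  induction m, hm using Nat.le_induction with
  | base => simp
  | succ m hjm ih =>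
    rw [Finset.sum_Icc_succ_top (by omega), ih]
    have : prv n (m + 1) = m := by unfold prv; split <;> omega
    rw [this]
    abel

lemma aux_prv_mem (n i : ℕ) (h : i ∈ Icc 1 n) : prv n i ∈ Icc 1 n := by
  simp only [mem_Icc] at h ⊢
  unfold prv
  split <;> omega

lemma aux_nxt_prv (n i : ℕ) (h : i ∈ Icc 1 n) : nxt n (prv n i) = i := by
  simp only [mem_Icc] at h
  unfold nxt prv
  split <;> split <;> omega

end Aux

/-- The maps `Φ_{−1}, Φ_0, Φ_1`, given by
`⟨Φ_{−1}(a),v⟩ = ⟨a,Φ_1(v)⟩ = B(a_{{n,1}},v)` and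
`⟨Φ_0(a),b⟩ = (1/2)Σ_{i ≥ j}(B(a_i,b_j)+B(b_i,a_j))`, form a chain map from the complex
`C = [⊕(l_i∩l_{i+1}) →∂→ ⊕l_i →Σ→ V]` to its dual `C*`:
`Φ_0 ∘ ∂ = Σ* ∘ Φ_{−1}` and `∂* ∘ Φ_0 = Φ_1 ∘ Σ`, stated here by evaluating both
squares against arbitrary elements `b ∈ ⊕ l_i` and `a, c ∈ ⊕ (l_i ∩ l_{i+1})`. -/
theorem maslov_chain_map_Phi
    {F V : Type} [Field F] [AddCommGroup V] [Module F V]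
    (hchar : (2 : F) ≠ 0) (n : ℕ) (hn : 1 ≤ n)
    (B : V →ₗ[F] V →ₗ[F] F) (hB : IsSymplectic B)
    (l : ℕ → Submodule F V) (hl : ∀ i ∈ Icc 1 n, IsLagrangian B (l i))
    (a : ℕ → V) (ha : ∀ i ∈ Icc 1 n, a i ∈ l i ⊓ l (nxt n i))
    (b : ℕ → V) (hb : ∀ i ∈ Icc 1 n, b i ∈ l i) :
    -- `Φ_0 ∘ ∂ = Σ* ∘ Φ_{−1}`, evaluated at `a` and paired with `b`
    (2 : F)⁻¹ * (∑ i ∈ Icc 1 n, ∑ j ∈ Icc 1 i,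
        (B (a i - a (prv n i)) (b j) + B (b i) (a j - a (prv n j)))) =
      B (a n) (∑ i ∈ Icc 1 n, b i) ∧
    -- `∂* ∘ Φ_0 = Φ_1 ∘ Σ`, evaluated at `b` and paired with `a`
    (2 : F)⁻¹ * (∑ i ∈ Icc 1 n, ∑ j ∈ Icc 1 i,
        (B (b i) (a j - a (prv n j)) + B (a i - a (prv n i)) (b j))) =
      B (a n) (∑ i ∈ Icc 1 n, b i) := by
  have skew : ∀ x y : V, B x y = - B y x := by
    intro x y
    have h := hB.1 (x + y)
    simp only [map_add, LinearMap.add_apply, hB.1] at h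
    linear_combination h
  -- a i ⊥ b i
  have z1 : ∀ i ∈ Icc 1 n, B (a i) (b i) = 0 := fun i hi =>
    (hl i hi).1 _ (ha i hi).1 _ (hb i hi)
  -- a (prv n j) ⊥ b j, since a (prv n j) ∈ l (nxt n (prv n j)) = l j
  have z2 : ∀ j ∈ Icc 1 n, B (a (prv n j)) (b j) = 0 := by
    intro j hj
    have hp := aux_prv_mem n j hj
    have h2 := (ha _ hp).2
    rw [aux_nxt_prv n j hj] at h2
    exact (hl j hj).1 _ h2 _ (hb j hj)
  have hp1 : prv n 1 = n := by unfold prv; simp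
  -- the main sum identity
  have key : ∑ i ∈ Icc 1 n, ∑ j ∈ Icc 1 i,
      (B (a i - a (prv n i)) (b j) + B (b i) (a j - a (prv n j))) =
      2 * B (a n) (∑ i ∈ Icc 1 n, b i) := by
    have hsplit : ∀ i ∈ Icc 1 n, ∑ j ∈ Icc 1 i,
        (B (a i - a (prv n i)) (b j) + B (b i) (a j - a (prv n j))) =
        (∑ j ∈ Icc 1 i, (B (a i) (b j) - B (a (prv n i)) (b j))) +
        ∑ j ∈ Icc 1 i, (B (b i) (a j) - B (b i) (a (prv n j))) := by
      intro i _
      rw [← Finset.sum_add_distrib]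
      refine Finset.sum_congr rfl fun j _ => ?_
      simp only [map_sub, LinearMap.sub_apply]
    rw [Finset.sum_congr rfl hsplit, Finset.sum_add_distrib]
    have hA : ∑ i ∈ Icc 1 n, ∑ j ∈ Icc 1 i,
        (B (a i) (b j) - B (a (prv n i)) (b j)) =
        ∑ j ∈ Icc 1 n, B (a n) (b j) := by
      rw [aux_tri_comm n (fun i j => B (a i) (b j) - B (a (prv n i)) (b j))]
      refine Finset.sum_congr rfl fun j hj => ?_
      simp only [mem_Icc] at hj
      rw [aux_telescope n j n hj.1 hj.2 (fun i => B (a i) (b j)),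
        z2 j (by simp only [mem_Icc]; omega), sub_zero]
    have hB' : ∑ i ∈ Icc 1 n, ∑ j ∈ Icc 1 i,
        (B (b i) (a j) - B (b i) (a (prv n j))) =
        ∑ i ∈ Icc 1 n, B (a n) (b i) := by
      refine Finset.sum_congr rfl fun i hi => ?_
      simp only [mem_Icc] at hi
      rw [aux_telescope n 1 i le_rfl hi.1 (fun j => B (b i) (a j)), hp1]
      have e1 : B (b i) (a i) = 0 := by
        rw [skew, z1 i (by simp only [mem_Icc]; omega), neg_zero]
      rw [e1, zero_sub, ← skew]
    rw [hA, hB', ← map_sum, two_mul]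
  refine ⟨?_, ?_⟩
  · rw [key, inv_mul_cancel_left₀ hchar]
  · have comm : ∑ i ∈ Icc 1 n, ∑ j ∈ Icc 1 i,
        (B (b i) (a j - a (prv n j)) + B (a i - a (prv n i)) (b j)) =
        ∑ i ∈ Icc 1 n, ∑ j ∈ Icc 1 i,
        (B (a i - a (prv n i)) (b j) + B (b i) (a j - a (prv n j))) :=
      Finset.sum_congr rfl fun i _ => Finset.sum_congr rfl fun j _ => add_comm _ _
    rw [comm, key, inv_mul_cancel_left₀ hchar]
end
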